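/- arXiv:1805.04294 — 4 statements merged into one kernel-verified Lean document; each statement's English description precedes it below -/
import Mathlib

section
/- Let A, B, C, D be n×n real matrices such that the block matrix M = fromBlocks A B C D is symplectic (MᵀJM = J), and let h be a symmetric n×n real matrix such that A + B·h is invertible. Then the matrix (C + D·h)·(A + B·h)⁻¹ is symmetric. -/
/-!
Write `P = A + B h` and `Q = C + D h`, so that the `2n × n` matrix with blocks `P, Q` is `M`
applied to the one with blocks `1, h`. The symplectic form `J` restricted to the columns of a
matrix with blocks `X, Y` is `Yᵀ X - Xᵀ Y`; it vanishes on the columns of `(1, h)` because `h` is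
symmetric, and `M` preserves it, so `Qᵀ P = Pᵀ Q`. Multiplying by `P⁻ᵀ` and `P⁻¹` gives the
symmetry of `Q P⁻¹`.
-/

open Matrix

namespace Matrix

variable {R l k : Type*} [CommRing R] [Fintype l] [DecidableEq l]

theorem transpose_fromRows_mul_J_mul_fromRows (X Y : Matrix l k R) :
    (fromRows X Y)ᵀ * J l R * fromRows X Y = Yᵀ * X - Xᵀ * Y := by
  rw [J, transpose_fromRows, Matrix.mul_assoc, fromBlocks_mul_fromRows, fromCols_mul_fromRows]
  simp only [Matrix.zero_mul, Matrix.neg_mul, Matrix.one_mul, zero_add, add_zero,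
    Matrix.mul_neg]
  abel

theorem isSymm_mul_nonsing_inv_of_transpose_mul_comm {P Q : Matrix l l R} (hP : IsUnit P)
    (hQP : Qᵀ * P = Pᵀ * Q) : (Q * P⁻¹).IsSymm := by
  have hdet : IsUnit P.det := (isUnit_iff_isUnit_det P).mp hP
  have hdetT : IsUnit Pᵀ.det := by rwa [det_transpose]
  calc (Q * P⁻¹)ᵀ = Pᵀ⁻¹ * Qᵀ * (P * P⁻¹) := by
        rw [transpose_mul, transpose_nonsing_inv, mul_nonsing_inv _ hdet, Matrix.mul_one]
    _ = Pᵀ⁻¹ * Pᵀ * (Q * P⁻¹) := by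
        simp only [Matrix.mul_assoc]
        rw [← Matrix.mul_assoc Qᵀ, hQP, Matrix.mul_assoc]
    _ = Q * P⁻¹ := by rw [nonsing_inv_mul _ hdetT, Matrix.one_mul]

end Matrix

/-- if `M = fromBlocks A B C D` is symplectic (`Mᵀ·J·M = J`), `h` is symmetric
and `A + B·h` is invertible, then `(C + D·h)·(A + B·h)⁻¹` is symmetric. -/
theorem symplectic_action_preserves_symmetric {n : ℕ}
    (A B C D h : Matrix (Fin n) (Fin n) ℝ)
    (hM : (Matrix.fromBlocks A B C D)ᵀ * Matrix.J (Fin n) ℝ * Matrix.fromBlocks A B C D =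
      Matrix.J (Fin n) ℝ)
    (hh : hᵀ = h) (hinv : IsUnit (A + B * h)) :
    ((C + D * h) * (A + B * h)⁻¹)ᵀ = (C + D * h) * (A + B * h)⁻¹ := by
  set X : Matrix (Fin n ⊕ Fin n) (Fin n) ℝ := fromRows 1 h
  have hgraph : fromBlocks A B C D * X = fromRows (A + B * h) (C + D * h) := by
    rw [fromBlocks_mul_fromRows, Matrix.mul_one, Matrix.mul_one]
  have hlag : (fromRows (A + B * h) (C + D * h))ᵀ * J (Fin n) ℝ
      * fromRows (A + B * h) (C + D * h) = 0 :=
    calc _ = Xᵀ * ((fromBlocks A B C D)ᵀ * J (Fin n) ℝ * fromBlocks A B C D) * X := by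
          rw [← hgraph, transpose_mul]
          simp only [Matrix.mul_assoc]
      _ = 0 := by
          rw [hM, transpose_fromRows_mul_J_mul_fromRows, hh, transpose_one, Matrix.mul_one,
            Matrix.one_mul, sub_self]
  rw [transpose_fromRows_mul_J_mul_fromRows, sub_eq_zero] at hlag
  exact isSymm_mul_nonsing_inv_of_transpose_mul_comm hinv hlag
end

section
/- The symplectic group Sp(2n, ℝ) is generated by the three families of block matrices: fromBlocks (Dᵀ)⁻¹ 0 0 D with D ∈ GL(n, ℝ), fromBlocks 1 0 C 1 with C symmetric, and fromBlocks 1 B 0 1 with B symmetric. That is, the subgroup of Sp(2n, ℝ) generated by the set of all such matrices is the whole group Sp(2n, ℝ). -/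
/-!
Write `M = fromBlocks A B C D`. Since `MᵀJM = J`, the matrix `AᵀC` is symmetric and
`DᵀA - BᵀC = 1`, so `ker A ∩ ker C = 0`. Let `S` be the orthogonal projection onto
`(range A)ᗮ`. If `(A + S C) v = 0`, then `A v ∈ range A ∩ (range A)ᗮ` vanishes, so
`C v ⊥ range A` by the symmetry of `AᵀC`, whence `C v = S C v = 0` and `v = 0`. Thus
`fromBlocks 1 S 0 1 * M` has the invertible upper-left block `A + S C`, and a symplectic
matrix with invertible upper-left block `A` factors as
`fromBlocks 1 0 (C A⁻¹) 1 * fromBlocks A 0 0 (Aᵀ)⁻¹ * fromBlocks 1 (A⁻¹ B) 0 1`.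
-/

open Matrix

namespace ContinuousLinearMap

variable {𝕜 E : Type*} [RCLike 𝕜] [NormedAddCommGroup E] [InnerProductSpace 𝕜 E]
  [FiniteDimensional 𝕜 E]

theorem isUnit_add_starProjection_orthogonal_range_mul {a c : E →L[𝕜] E}
    (hac : ∀ x y, inner 𝕜 (a x) (c y) = inner 𝕜 (c x) (a y))
    (hker : ∀ v, a v = 0 → c v = 0 → v = 0) :
    IsUnit (a + (a : E →ₗ[𝕜] E).rangeᗮ.starProjection * c) := by
  set K := (a : E →ₗ[𝕜] E).range
  have : CompleteSpace E := FiniteDimensional.complete 𝕜 E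
  have hinj : Function.Injective (a + Kᗮ.starProjection * c) := by
    refine (injective_iff_map_eq_zero _).2 fun v hv => ?_
    replace hv : a v = -Kᗮ.starProjection (c v) := eq_neg_of_add_eq_zero_left hv
    have hav : a v = 0 := by
      refine Submodule.inf_orthogonal_eq_bot K |>.le ⟨⟨v, rfl⟩, ?_⟩
      rw [hv]
      exact Kᗮ.neg_mem (Kᗮ.starProjection_apply_mem _)
    have hcv : c v ∈ Kᗮ := by
      rintro _ ⟨x, rfl⟩
      simp [hac, hav]
    refine hker v hav ?_
    rwa [hav, eq_comm, neg_eq_zero, Submodule.starProjection_eq_self_iff.2 hcv] at hv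
  exact isUnit_iff_bijective.2
    ⟨hinj, LinearMap.injective_iff_surjective (f := (_ : E →ₗ[𝕜] E)).1 hinj⟩

end ContinuousLinearMap

namespace Matrix

section Hermitian

open ContinuousLinearMap WithLp

variable {𝕜 n : Type*} [RCLike 𝕜] [Fintype n] [DecidableEq n]

theorem exists_isHermitian_isUnit_add_mul {A C : Matrix n n 𝕜} (hAC : Aᴴ * C = Cᴴ * A)
    (hker : ∀ v, A *ᵥ v = 0 → C *ᵥ v = 0 → v = 0) :
    ∃ S : Matrix n n 𝕜, S.IsHermitian ∧ IsUnit (A + S * C) := by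
  let e := toEuclideanCLM (n := n) (𝕜 := 𝕜)
  let K := (e A : EuclideanSpace 𝕜 n →ₗ[𝕜] EuclideanSpace 𝕜 n).range
  refine ⟨e.symm Kᗮ.starProjection, (isSelfAdjoint_starProjection _).map e.symm, ?_⟩
  rw [← MulEquiv.isUnit_map e, map_add, map_mul, StarAlgEquiv.apply_symm_apply]
  refine ContinuousLinearMap.isUnit_add_starProjection_orthogonal_range_mul (fun x y => ?_)
    fun v hA hC => ?_
  · have hadj : adjoint (e A) * e C = adjoint (e C) * e A := by
      simp only [← star_eq_adjoint, ← map_star, ← map_mul, star_eq_conjTranspose, hAC]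
    rw [← adjoint_inner_right, ← adjoint_inner_right, ← mul_apply_eq_comp,
      ← mul_apply_eq_comp, hadj]
  · have hv := hker (ofLp v) (congrArg ofLp hA) (congrArg ofLp hC)
    simpa using congrArg (toLp 2) hv

end Hermitian

section Symplectic

variable {l R : Type*} [Fintype l] [DecidableEq l] [CommRing R]

theorem fromBlocks_mem_symplecticGroup_iff {A B C D : Matrix l l R} :
    fromBlocks A B C D ∈ symplecticGroup l R ↔
      Aᵀ * C = Cᵀ * A ∧ Bᵀ * D = Dᵀ * B ∧ Aᵀ * D - Cᵀ * B = 1 := by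
  rw [SymplecticGroup.mem_iff', J, fromBlocks_transpose, fromBlocks_multiply,
    fromBlocks_multiply, fromBlocks_inj]
  simp only [Matrix.mul_zero, Matrix.mul_one, Matrix.mul_neg, zero_add, add_zero,
    Matrix.neg_mul, ← sub_eq_add_neg, sub_eq_zero]
  constructor
  · rintro ⟨h₁₁, h₁₂, -, h₂₂⟩
    exact ⟨h₁₁.symm, h₂₂.symm, by linear_combination (norm := noncomm_ring) -h₁₂⟩
  · rintro ⟨hAC, hBD, hAD⟩
    refine ⟨hAC.symm, by linear_combination (norm := noncomm_ring) -hAD, ?_, hBD.symm⟩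
    have hDA := congrArg transpose hAD
    simp only [transpose_sub, transpose_mul, transpose_transpose, transpose_one] at hDA
    linear_combination (norm := noncomm_ring) hDA

theorem fromBlocks_inv_transpose_mem_symplecticGroup {D : Matrix l l R} (hD : IsUnit D) :
    fromBlocks (Dᵀ)⁻¹ 0 0 D ∈ symplecticGroup l R := by
  simp [fromBlocks_mem_symplecticGroup_iff, transpose_nonsing_inv,
    nonsing_inv_mul _ ((isUnit_iff_isUnit_det D).1 hD)]

theorem fromBlocks_one_zero_sym_one_mem_symplecticGroup {C : Matrix l l R} (hC : Cᵀ = C) :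
    fromBlocks 1 0 C 1 ∈ symplecticGroup l R := by
  simp [fromBlocks_mem_symplecticGroup_iff, hC]

theorem fromBlocks_one_sym_zero_one_mem_symplecticGroup {B : Matrix l l R} (hB : Bᵀ = B) :
    fromBlocks 1 B 0 1 ∈ symplecticGroup l R := by
  simp [fromBlocks_mem_symplecticGroup_iff, hB]

variable (l R) in
def symplecticGenerators : Set (symplecticGroup l R) :=
  { M | (∃ D : Matrix l l R, IsUnit D ∧
      (M : Matrix (l ⊕ l) (l ⊕ l) R) = fromBlocks (Dᵀ)⁻¹ 0 0 D) ∨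
    (∃ C : Matrix l l R, Cᵀ = C ∧ (M : Matrix (l ⊕ l) (l ⊕ l) R) = fromBlocks 1 0 C 1) ∨
    (∃ B : Matrix l l R, Bᵀ = B ∧ (M : Matrix (l ⊕ l) (l ⊕ l) R) = fromBlocks 1 B 0 1) }

theorem mem_closure_symplecticGenerators_of_isUnit {M : symplecticGroup l R}
    {A B C D : Matrix l l R} (hM : (M : Matrix (l ⊕ l) (l ⊕ l) R) = fromBlocks A B C D)
    (hA : IsUnit A) : M ∈ Subgroup.closure (symplecticGenerators l R) := by
  set G := Subgroup.closure (symplecticGenerators l R)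
  have hdet : IsUnit A.det := (isUnit_iff_isUnit_det A).1 hA
  have hAT : IsUnit Aᵀ := (isUnit_transpose A).2 hA
  obtain ⟨hAC, -, -⟩ := fromBlocks_mem_symplecticGroup_iff.1 (hM ▸ M.2)
  have hCA : (-(C * A⁻¹))ᵀ = -(C * A⁻¹) := by
    have hC : Cᵀ = Aᵀ * (C * A⁻¹) := by
      rw [← Matrix.mul_assoc, hAC, mul_nonsing_inv_cancel_right _ _ hdet]
    rw [transpose_neg, transpose_mul, transpose_nonsing_inv, hC,
      nonsing_inv_mul_cancel_left _ _ (by rwa [det_transpose])]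
  let L : symplecticGroup l R :=
    ⟨fromBlocks 1 0 (-(C * A⁻¹)) 1, fromBlocks_one_zero_sym_one_mem_symplecticGroup hCA⟩
  let Δ : symplecticGroup l R :=
    ⟨fromBlocks ((Aᵀ)ᵀ)⁻¹ 0 0 Aᵀ, fromBlocks_inv_transpose_mem_symplecticGroup hAT⟩
  have hΔL : Δ * L ∈ G := mul_mem (Subgroup.subset_closure (Or.inl ⟨_, hAT, rfl⟩))
    (Subgroup.subset_closure (Or.inr (Or.inl ⟨_, hCA, rfl⟩)))
  have hN : ((Δ * L * M : symplecticGroup l R) : Matrix (l ⊕ l) (l ⊕ l) R) =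
      fromBlocks 1 (A⁻¹ * B) 0 (Aᵀ * (D - C * A⁻¹ * B)) := by
    simp [L, Δ, hM, fromBlocks_multiply, nonsing_inv_mul _ hdet, ← Matrix.mul_assoc,
      nonsing_inv_mul_cancel_right _ _ hdet, sub_eq_neg_add, Matrix.mul_add]
  obtain ⟨-, hX, hY⟩ := fromBlocks_mem_symplecticGroup_iff.1 (hN ▸ (Δ * L * M).2)
  simp only [transpose_one, Matrix.one_mul, transpose_zero, Matrix.zero_mul, sub_zero] at hY
  rw [hY, Matrix.mul_one, transpose_one, Matrix.one_mul] at hX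
  exact (G.mul_mem_cancel_left hΔL).1
    (Subgroup.subset_closure (Or.inr (Or.inr ⟨_, hX, hN.trans (by rw [hY])⟩)))

end Symplectic

end Matrix

/-- the symplectic group `Sp(2n, ℝ)` (the group of `2n × 2n` real matrices `M`
with `Mᵀ·J·M = J`, i.e. `Matrix.symplecticGroup`, cf. `SymplecticGroup.mem_iff'`) is
generated by the three families `fromBlocks (Dᵀ)⁻¹ 0 0 D` (`D` invertible),
`fromBlocks 1 0 C 1` (`C` symmetric) and `fromBlocks 1 B 0 1` (`B` symmetric). -/
theorem symplecticGroup_generated_by_three_families (n : ℕ) :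
    Subgroup.closure
      { M : Matrix.symplecticGroup (Fin n) ℝ |
        (∃ D : Matrix (Fin n) (Fin n) ℝ, IsUnit D ∧
          (M : Matrix (Fin n ⊕ Fin n) (Fin n ⊕ Fin n) ℝ) = Matrix.fromBlocks (Dᵀ)⁻¹ 0 0 D) ∨
        (∃ C : Matrix (Fin n) (Fin n) ℝ, Cᵀ = C ∧
          (M : Matrix (Fin n ⊕ Fin n) (Fin n ⊕ Fin n) ℝ) = Matrix.fromBlocks 1 0 C 1) ∨
        (∃ B : Matrix (Fin n) (Fin n) ℝ, Bᵀ = B ∧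
          (M : Matrix (Fin n ⊕ Fin n) (Fin n ⊕ Fin n) ℝ) = Matrix.fromBlocks 1 B 0 1) } =
      ⊤ := by
  refine eq_top_iff.2 fun M _ => ?_
  change M ∈ Subgroup.closure (symplecticGenerators (Fin n) ℝ)
  obtain ⟨A, B, C, D, hM⟩ : ∃ A B C D, (M : Matrix (Fin n ⊕ Fin n) (Fin n ⊕ Fin n) ℝ) =
      fromBlocks A B C D := ⟨_, _, _, _, (fromBlocks_toBlocks _).symm⟩
  obtain ⟨hAC, -, hAD⟩ := fromBlocks_mem_symplecticGroup_iff.1 (hM ▸ M.2)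
  have hker : ∀ v, A *ᵥ v = 0 → C *ᵥ v = 0 → v = 0 := fun v hA hC => by
    have hDA : Dᵀ * A - Bᵀ * C = 1 := by
      simpa using congrArg transpose hAD
    simpa [sub_mulVec, ← mulVec_mulVec, hA, hC, eq_comm] using congrArg (· *ᵥ v) hDA
  obtain ⟨S, hS, hAS⟩ := exists_isHermitian_isUnit_add_mul
    (by simpa only [conjTranspose_eq_transpose_of_trivial] using hAC) hker
  rw [IsHermitian, conjTranspose_eq_transpose_of_trivial] at hS
  let U : symplecticGroup (Fin n) ℝ :=
    ⟨fromBlocks 1 S 0 1, fromBlocks_one_sym_zero_one_mem_symplecticGroup hS⟩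
  have hU : U ∈ Subgroup.closure (symplecticGenerators (Fin n) ℝ) :=
    Subgroup.subset_closure (Or.inr (Or.inr ⟨S, hS, rfl⟩))
  have hUM : (↑(U * M) : Matrix (Fin n ⊕ Fin n) (Fin n ⊕ Fin n) ℝ) =
      fromBlocks (A + S * C) (B + S * D) C D := by
    simp [U, hM, fromBlocks_multiply]
  exact (Subgroup.mul_mem_cancel_left _ hU).1
    (mem_closure_symplecticGenerators_of_isUnit hUM hAS)
end

section
/- Let K be a field, α ∈ Kⁿ a nonzero vector, and h a symmetric n×n matrix over K. Then the kernel of h contains the hyperplane {v ∈ Kⁿ : α·v = 0} (i.e., α·v = 0 implies h·v = 0) if and only if there exists a scalar c ∈ K such that h = c · (α αᵀ), the scalar multiple of the outer product of α with itself. -/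
open Matrix

/-! A vector `w` with `α·v = 0 → w·v = 0` is proportional to `α`, as one sees by testing against
`αₖ eⱼ - αⱼ eₖ`. Applied to the rows of `h`, this makes `h = β αᵀ` of rank one; symmetry then forces
`β` itself to be proportional to `α`. -/

section RankOne

variable {m ι R K : Type*}

lemma mul_eq_mul_of_forall_dotProduct_eq_zero [CommRing R] [Fintype ι] [DecidableEq ι]
    {α w : ι → R} (H : ∀ v, α ⬝ᵥ v = 0 → w ⬝ᵥ v = 0) (j k : ι) :
    w j * α k = w k * α j := by
  have hv : α ⬝ᵥ (Pi.single j (α k) - Pi.single k (α j)) = 0 := by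
    simp [dotProduct_sub, mul_comm]
  simpa [dotProduct_sub, sub_eq_zero] using H _ hv

section Field

variable [Field K]

lemma eq_div_smul_of_mul_eq_mul {α w : ι → K} (hw : ∀ j k, w j * α k = w k * α j) {k : ι}
    (hk : α k ≠ 0) : w = (w k / α k) • α := by
  funext j
  rw [Pi.smul_apply, smul_eq_mul, div_mul_eq_mul_div, eq_div_iff hk, hw]

lemma eq_vecMulVec_of_forall_mulVec_eq_zero [Fintype ι] [DecidableEq ι] {α : ι → K}
    {h : Matrix m ι K} (H : ∀ v, α ⬝ᵥ v = 0 → h *ᵥ v = 0) {k : ι} (hk : α k ≠ 0) :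
    h = vecMulVec (fun i ↦ h i k / α k) α := by
  ext i j
  have hrow := mul_eq_mul_of_forall_dotProduct_eq_zero (w := h i) fun v hv ↦ congrFun (H v hv) i
  exact congrFun (eq_div_smul_of_mul_eq_mul hrow hk) j

lemma vecMulVec_eq_smul_of_transpose_eq {α β : ι → K} (hsymm : (vecMulVec β α)ᵀ = vecMulVec β α)
    {k : ι} (hk : α k ≠ 0) : vecMulVec β α = (β k / α k) • vecMulVec α α := by
  have hβ : ∀ j l, β j * α l = β l * α j := fun j l ↦ congrFun₂ hsymm l j
  rw [← smul_vecMulVec, ← eq_div_smul_of_mul_eq_mul hβ hk]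

end Field

end RankOne

/-- for a nonzero vector `α` and a symmetric matrix `h`, the kernel of `h`
contains the hyperplane `{v : α·v = 0}` iff `h` is a scalar multiple of the outer product
`α αᵀ` (whose `(i,j)` entry is `αᵢ·αⱼ`, i.e. `Matrix.vecMulVec α α`). -/
theorem ker_contains_hyperplane_iff_square_of_lin_form {K : Type*} [Field K] {n : ℕ}
    (α : Fin n → K) (hα : α ≠ 0) (h : Matrix (Fin n) (Fin n) K) (hh : hᵀ = h) :
    (∀ v : Fin n → K, α ⬝ᵥ v = 0 → h *ᵥ v = 0) ↔
      ∃ c : K, h = c • Matrix.vecMulVec α α := by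
  constructor
  · intro H
    obtain ⟨k, hk⟩ := Function.ne_iff.mp hα
    have hrank := eq_vecMulVec_of_forall_mulVec_eq_zero H hk
    exact ⟨_, hrank.trans (vecMulVec_eq_smul_of_transpose_eq (hrank ▸ hh) hk)⟩
  · rintro ⟨c, rfl⟩ v hv
    simp [smul_mulVec, vecMulVec_mulVec, hv]
end

section
/- The Plücker map is injective on decomposable n-vectors: let V be a finite-dimensional vector space over a field K, and let v, w : Fin n → V be two linearly independent families. If the wedge products v₁ ∧ ⋯ ∧ vₙ and w₁ ∧ ⋯ ∧ wₙ in the n-th exterior power ⋀ⁿ V are proportional by a nonzero scalar (i.e., v₁ ∧ ⋯ ∧ vₙ = c • (w₁ ∧ ⋯ ∧ wₙ) for some c ≠ 0 in K), then span{v₁, …, vₙ} = span{w₁, …, wₙ}. -/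
/-!
For a linearly independent family `w`, a vector `x` lies in `span w` exactly when
`x ∧ w₁ ∧ ⋯ ∧ wₙ = 0`, and every `vᵢ` kills `v₁ ∧ ⋯ ∧ vₙ` in this way. So if the two wedge
products are proportional, each `vᵢ` lies in `span w`; both spans have dimension `n`, hence
they coincide.
-/

namespace ExteriorAlgebra

section CommRing

variable {R M : Type*} [CommRing R] [AddCommGroup M] [Module R M] {n : ℕ}

theorem ι_mul_ιMulti (x : M) (v : Fin n → M) :
    ι R x * ιMulti R n v = ιMulti R (n + 1) (Fin.cons x v) := by
  simp [ιMulti_succ_apply, Matrix.vecTail]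

theorem ι_mul_ιMulti_self_eq_zero (v : Fin n → M) (i : Fin n) :
    ι R (v i) * ιMulti R n v = 0 := by
  rw [ι_mul_ιMulti]
  exact (ιMulti R (n + 1)).map_eq_zero_of_eq _ (i := 0) (j := i.succ) rfl (Fin.succ_ne_zero i).symm

end CommRing

section Field

variable {K V : Type*} [Field K] [AddCommGroup V] [Module K V] {n : ℕ}

theorem ιMulti_ne_zero_of_linearIndependent {u : Fin n → V} (hu : LinearIndependent K u) :
    ιMulti K n u ≠ 0 := by
  have := (exteriorPower.ιMulti_family_linearIndependent_field n hu).ne_zero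
    (Set.powersetCard.ofFinEmbEquiv (RelEmbedding.refl (· ≤ ·)))
  rw [← exteriorPower.ιMulti_apply_coe, Ne, ZeroMemClass.coe_eq_zero]
  simpa [exteriorPower.ιMulti_family] using this

theorem mem_span_of_ι_mul_ιMulti_eq_zero {w : Fin n → V} (hw : LinearIndependent K w) {x : V}
    (hx : ι K x * ιMulti K n w = 0) : x ∈ Submodule.span K (Set.range w) := by
  by_contra hx'
  rw [ι_mul_ιMulti] at hx
  exact ιMulti_ne_zero_of_linearIndependent (linearIndependent_finCons.2 ⟨hw, hx'⟩) hx

theorem span_le_of_ιMulti_eq_smul {v w : Fin n → V} (hw : LinearIndependent K w) {c : K}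
    (hc : c ≠ 0) (hvw : ιMulti K n v = c • ιMulti K n w) :
    Submodule.span K (Set.range v) ≤ Submodule.span K (Set.range w) := by
  rw [Submodule.span_le, Set.range_subset_iff]
  intro i
  refine mem_span_of_ι_mul_ιMulti_eq_zero hw ?_
  have := ι_mul_ιMulti_self_eq_zero (R := K) v i
  rwa [hvw, mul_smul_comm, smul_eq_zero, or_iff_right hc] at this

end Field

end ExteriorAlgebra

theorem plucker_injective_on_decomposables_general {K V : Type*} [Field K] [AddCommGroup V]
    [Module K V] {n : ℕ} (v w : Fin n → V)
    (hv : LinearIndependent K v) (hw : LinearIndependent K w) (c : K) (hc : c ≠ 0)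
    (hvw : ExteriorAlgebra.ιMulti K n v = c • ExteriorAlgebra.ιMulti K n w) :
    Submodule.span K (Set.range v) = Submodule.span K (Set.range w) := by
  have : FiniteDimensional K (Submodule.span K (Set.range w)) :=
    .span_of_finite K (Set.finite_range w)
  refine Submodule.eq_of_le_of_finrank_le
    (ExteriorAlgebra.span_le_of_ιMulti_eq_smul hw hc hvw) ?_
  rw [finrank_span_eq_card hv, finrank_span_eq_card hw]

/-- injectivity of the Plücker map on decomposable `n`-vectors: if `v` and
`w` are linearly independent families of `n` vectors in a finite-dimensional vector space
`V` and `v₁ ∧ ⋯ ∧ vₙ = c • (w₁ ∧ ⋯ ∧ wₙ)` for some nonzero scalar `c` (the wedge products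
being taken in the exterior algebra, where they span the `n`-th exterior power `⋀[K]^n V`),
then `span{v₁,…,vₙ} = span{w₁,…,wₙ}`. -/
theorem plucker_injective_on_decomposables {K V : Type*} [Field K] [AddCommGroup V]
    [Module K V] [FiniteDimensional K V] {n : ℕ} (v w : Fin n → V)
    (hv : LinearIndependent K v) (hw : LinearIndependent K w) (c : K) (hc : c ≠ 0)
    (hvw : ExteriorAlgebra.ιMulti K n v = c • ExteriorAlgebra.ιMulti K n w) :
    Submodule.span K (Set.range v) = Submodule.span K (Set.range w) :=
  plucker_injective_on_decomposables_general v w hv hw c hc hvw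
end
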